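/- Let γ0 > 0, a < 1 with a ≠ 0, 0 < p < 1 be real, and set c := (1 − (1 − p)^a)/(a·p^a). Then the prior Simpson's index of diversity under the generalized negative binomial process satisfies Σ_{n=2}^∞ [γ0 · p^{−a} · R_{n,γ0,a,p}(2,2)/R_{n,γ0,a,p}(1,1)] · p_N(n)/(1 − p_N(0) − p_N(1)) = [γ0^2 · p^{−2a} · e^{−γ0 c}/(1 − e^{−γ0 c} − γ0 · p^{1−a} · e^{−γ0 c})] · Σ_{n=2}^∞ (p^n/n!) · R_{n,γ0,a,p}(2,2), where both series converge. -/

import Mathlib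

/-!
Write `q = γ0 p^(-a)` and `G(x) = (1 - (1 - x)^a)/a = Σ_m Γ(m - a)/(m! Γ(1 - a)) x^m`. Then
`S_a(n,l) = n!/l! [x^n] G^l`, and differentiating `G^(l+1)` with `(1 - x) G' = 1 - a G` gives the
triangle recursion `S_a(n+1,l+1) = S_a(n,l) + (n - a(l+1)) S_a(n,l+1)`. This recursion and the one
defining `R` make `Σ_j q^j S_a(i,j) R_n(i,j)` independent of `i`; comparing `i = n` with `i = 1`
gives `D_n = q R_n(1,1)`, so each term of the left series is the constant factor times
`p^n/n! · R_n(2,2)`. Convergence: `q R_n(2,2) ≤ R_n(1,1)`, and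
`x^n/n! · D_n ≤ exp(q G(x))` for `0 ≤ x < 1`, so `p^n/n! · D_n` is dominated by a geometric series.
-/
open scoped Classical BigOperators

/-- Generalized Stirling numbers of the first kind:
`S_a(n,l) = (n!/l!) · Σ over compositions of n into l positive parts of
∏ Γ(n_k − a)/(n_k!·Γ(1−a))`. -/
noncomputable def genStirling (a : ℝ) (n l : ℕ) : ℝ :=
  (n.factorial : ℝ) / (l.factorial : ℝ) *
    ∑ f ∈ (Finset.Nat.antidiagonalTuple l n).filter (fun f => ∀ k, 0 < f k),
      ∏ k, Real.Gamma ((f k : ℝ) - a) / ((f k).factorial * Real.Gamma (1 - a))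

/-- `D_n = Σ_{ℓ=0}^n γ0^ℓ · p^{−a·ℓ} · S_a(n,ℓ)`. -/
noncomputable def Dsum (γ0 a p : ℝ) (n : ℕ) : ℝ :=
  ∑ l ∈ Finset.range (n + 1), γ0 ^ l * p ^ (-(a * (l : ℝ))) * genStirling a n l

/-- The generalized negative binomial probability mass function
`p_N(n) = (p^n/n!) · exp(−γ0·(1 − (1−p)^a)/(a·p^a)) · D_n`. -/
noncomputable def gnbPMF (γ0 a p : ℝ) (n : ℕ) : ℝ :=
  p ^ n / (n.factorial : ℝ) * Real.exp (-γ0 * (1 - (1 - p) ^ a) / (a * p ^ a)) *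
    Dsum γ0 a p n

/-- The backward recursion `R_{n,γ0,a,p}(i,j)`: `R(n,j) = 1` and
`R(i,j) = (i − a·j)·R(i+1,j) + γ0·p^{−a}·R(i+1,j+1)` for `i < n`. -/
noncomputable def Rrec (γ0 a p : ℝ) (n : ℕ) : ℕ → ℕ → ℝ
  | i, j =>
    if _ : n ≤ i then 1
    else ((i : ℝ) - a * (j : ℝ)) * Rrec γ0 a p n (i + 1) j
      + γ0 * p ^ (-a) * Rrec γ0 a p n (i + 1) (j + 1)
  termination_by i _ => n - i
  decreasing_by all_goals omega

open Finset PowerSeries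

theorem Finset.Nat.sum_antidiagonalTuple_succ {M : Type*} [AddCommMonoid M] (k n : ℕ)
    (F : (Fin (k + 1) → ℕ) → M) :
    ∑ x ∈ Nat.antidiagonalTuple (k + 1) n, F x =
      ∑ ij ∈ antidiagonal n, ∑ y ∈ Nat.antidiagonalTuple k ij.2, F (Fin.cons ij.1 y) := by
  simp only [Finset.sum, Nat.antidiagonalTuple, Multiset.Nat.antidiagonalTuple,
    List.Nat.antidiagonalTuple, Multiset.map_coe, Multiset.sum_coe, List.flatMap,
    List.map_flatten, List.sum_flatten, List.map_map]
  change _ = (Multiset.map _ (List.Nat.antidiagonal n : Multiset (ℕ × ℕ))).sum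
  rw [Multiset.map_coe, Multiset.sum_coe]
  simp only [Function.comp_def, List.map_map]

namespace PowerSeries

variable {R : Type*}

theorem coeff_pow_eq_sum_antidiagonalTuple [CommSemiring R] (φ : R⟦X⟧) (l n : ℕ) :
    coeff n (φ ^ l) = ∑ f ∈ Finset.Nat.antidiagonalTuple l n, ∏ k, coeff (f k) φ := by
  induction l generalizing n with
  | zero => cases n <;> simp [coeff_one]
  | succ l ih =>
    simp only [pow_succ', coeff_mul, ih, Finset.Nat.sum_antidiagonalTuple_succ, mul_sum,
      Fin.prod_univ_succ, Fin.cons_zero, Fin.cons_succ]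

theorem coeff_one_sub_X_mul_derivative [CommRing R] (φ : R⟦X⟧) (n : ℕ) :
    coeff n ((1 - X) * d⁄dX R φ) = (n + 1) * coeff (n + 1) φ - n * coeff n φ := by
  rcases n with _ | n
  · simp only [sub_mul, one_mul, map_sub, coeff_zero_X_mul, coeff_derivative]
    ring
  · simp [sub_mul, coeff_derivative, coeff_succ_X_mul, mul_comm]

end PowerSeries

/-- The `m`-th coefficient of `(1 - (1 - x) ^ a) / a`. -/
noncomputable def stirlingWeight (a : ℝ) (m : ℕ) : ℝ :=
  if m = 0 then 0 else Real.Gamma (m - a) / (m.factorial * Real.Gamma (1 - a))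

noncomputable def stirlingSeries (a : ℝ) : ℝ⟦X⟧ := mk (stirlingWeight a)

section Stirling

variable {a : ℝ}

@[simp] theorem stirlingWeight_zero (a : ℝ) : stirlingWeight a 0 = 0 := rfl

theorem stirlingWeight_one (ha : a < 1) : stirlingWeight a 1 = 1 := by
  have : Real.Gamma (1 - a) ≠ 0 := (Real.Gamma_pos_of_pos (by linarith)).ne'
  simp [stirlingWeight, this]

theorem stirlingWeight_pos (ha : a < 1) {m : ℕ} (hm : m ≠ 0) : 0 < stirlingWeight a m := by
  have hm1 : (1 : ℝ) ≤ m := by exact_mod_cast Nat.one_le_iff_ne_zero.mpr hm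
  rw [stirlingWeight, if_neg hm]
  have := Real.Gamma_pos_of_pos (show 0 < (m : ℝ) - a by linarith)
  have := Real.Gamma_pos_of_pos (show 0 < 1 - a by linarith)
  positivity

theorem stirlingWeight_nonneg (ha : a < 1) (m : ℕ) : 0 ≤ stirlingWeight a m := by
  rcases eq_or_ne m 0 with rfl | hm
  · rfl
  · exact (stirlingWeight_pos ha hm).le

theorem stirlingWeight_succ (ha : a < 1) {k : ℕ} (hk : k ≠ 0) :
    ((k : ℝ) + 1) * stirlingWeight a (k + 1) = (k - a) * stirlingWeight a k := by
  have hk1 : (1 : ℝ) ≤ k := by exact_mod_cast Nat.one_le_iff_ne_zero.mpr hk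
  have hΓ : Real.Gamma ((k : ℝ) + 1 - a) = (k - a) * Real.Gamma (k - a) := by
    rw [add_sub_right_comm, Real.Gamma_add_one (by linarith)]
  have : Real.Gamma (1 - a) ≠ 0 := (Real.Gamma_pos_of_pos (by linarith)).ne'
  simp only [stirlingWeight, if_neg hk, Nat.succ_ne_zero, if_false, Nat.cast_add, Nat.cast_one,
    hΓ, Nat.factorial_succ, Nat.cast_mul]
  field_simp

@[simp] theorem coeff_stirlingSeries (a : ℝ) (m : ℕ) :
    coeff m (stirlingSeries a) = stirlingWeight a m :=
  coeff_mk _ _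

theorem one_sub_X_mul_derivative_stirlingSeries (ha : a < 1) :
    (1 - X) * d⁄dX ℝ (stirlingSeries a) = 1 - a • stirlingSeries a := by
  ext n
  rw [coeff_one_sub_X_mul_derivative, map_sub, coeff_smul, coeff_one]
  simp only [coeff_stirlingSeries]
  rcases eq_or_ne n 0 with rfl | hn
  · simp [stirlingWeight_one ha]
  · rw [stirlingWeight_succ ha hn, if_neg hn]
    ring

theorem coeff_stirlingSeries_pow_succ (ha : a < 1) (n l : ℕ) :
    (n + 1) * coeff (n + 1) (stirlingSeries a ^ (l + 1)) =
      (l + 1) * coeff n (stirlingSeries a ^ l) +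
        (n - a * (l + 1)) * coeff n (stirlingSeries a ^ (l + 1)) := by
  set G := stirlingSeries a
  have hpow : (1 - X) * d⁄dX ℝ (G ^ (l + 1)) = ((l : ℝ) + 1) • (G ^ l - a • G ^ (l + 1)) := by
    calc (1 - X) * d⁄dX ℝ (G ^ (l + 1))
        = ((l : ℝ) + 1) • (G ^ l * ((1 - X) * d⁄dX ℝ G)) := by
          rw [Derivation.leibniz_pow, Nat.add_sub_cancel, smul_eq_mul, nsmul_eq_mul]
          simp only [Algebra.smul_def, map_add, map_natCast, map_one, Nat.cast_add, Nat.cast_one]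
          ring
      _ = ((l : ℝ) + 1) • (G ^ l - a • G ^ (l + 1)) := by
          rw [one_sub_X_mul_derivative_stirlingSeries ha, mul_sub, mul_one, mul_smul_comm, pow_succ]
  have := congrArg (coeff n) hpow
  rw [coeff_one_sub_X_mul_derivative, coeff_smul, map_sub, coeff_smul] at this
  linear_combination this

theorem coeff_stirlingSeries_pow_of_lt {n l : ℕ} (h : n < l) :
    coeff n (stirlingSeries a ^ l) = 0 := by
  obtain ⟨H, hH⟩ : X ∣ stirlingSeries a := by
    rw [X_dvd_iff]
    exact stirlingWeight_zero a
  rw [hH, mul_pow, coeff_X_pow_mul', if_neg (not_le.mpr h)]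

theorem coeff_stirlingSeries_pow_nonneg (ha : a < 1) (n l : ℕ) :
    0 ≤ coeff n (stirlingSeries a ^ l) := by
  rw [coeff_pow_eq_sum_antidiagonalTuple]
  exact sum_nonneg fun f _ ↦ prod_nonneg fun k _ ↦ by
    simpa only [coeff_stirlingSeries] using stirlingWeight_nonneg ha (f k)

theorem summable_stirlingWeight_mul_pow (ha : a < 1) {x : ℝ} (hx0 : 0 ≤ x) (hx1 : x < 1) :
    Summable fun m ↦ stirlingWeight a m * x ^ m := by
  have hratio := (tendsto_add_mul_div_add_mul_atTop_nhds (-a) 1 1 one_ne_zero).const_mul x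
  simp only [one_mul, div_one, mul_one] at hratio
  refine summable_of_ratio_norm_eventually_le (r := (1 + x) / 2) (by linarith) ?_
  filter_upwards [hratio.eventually_lt_const (show x < (1 + x) / 2 by linarith),
    Filter.eventually_ne_atTop 0] with k hk hk0
  have hk1 : (k : ℝ) + 1 ≠ 0 := by positivity
  have hw : stirlingWeight a (k + 1) = (k - a) / (k + 1) * stirlingWeight a k := by
    rw [div_mul_eq_mul_div, eq_div_iff hk1, mul_comm, stirlingWeight_succ ha hk0]
  have hwk := stirlingWeight_nonneg ha k
  have hwk1 := stirlingWeight_nonneg ha (k + 1)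
  calc ‖stirlingWeight a (k + 1) * x ^ (k + 1)‖
      = x * ((-a + k) / (1 + k)) * (stirlingWeight a k * x ^ k) := by
        rw [Real.norm_of_nonneg (by positivity), hw]
        ring
    _ ≤ (1 + x) / 2 * ‖stirlingWeight a k * x ^ k‖ := by
        rw [Real.norm_of_nonneg (by positivity)]
        exact mul_le_mul_of_nonneg_right hk.le (by positivity)

theorem coeff_stirlingSeries_pow_mul_pow_le (ha : a < 1) {x : ℝ} (hx0 : 0 ≤ x) (hx1 : x < 1)
    (l n : ℕ) :
    coeff n (stirlingSeries a ^ l) * x ^ n ≤ (∑' m, stirlingWeight a m * x ^ m) ^ l := by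
  have hsum := summable_stirlingWeight_mul_pow ha hx0 hx1
  have hterm : ∀ m, 0 ≤ stirlingWeight a m * x ^ m := fun m ↦
    mul_nonneg (stirlingWeight_nonneg ha m) (pow_nonneg hx0 m)
  induction l generalizing n with
  | zero => by_cases hn : n = 0 <;> simp [coeff_one, hn]
  | succ l ih =>
    calc coeff n (stirlingSeries a ^ (l + 1)) * x ^ n
        = ∑ ij ∈ antidiagonal n, (stirlingWeight a ij.1 * x ^ ij.1) *
            (coeff ij.2 (stirlingSeries a ^ l) * x ^ ij.2) := by
          rw [pow_succ', coeff_mul, sum_mul]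
          refine sum_congr rfl fun ij hij ↦ ?_
          rw [← mem_antidiagonal.mp hij, pow_add, coeff_stirlingSeries]
          ring
      _ ≤ ∑ ij ∈ antidiagonal n, (stirlingWeight a ij.1 * x ^ ij.1) *
            (∑' m, stirlingWeight a m * x ^ m) ^ l :=
          sum_le_sum fun ij _ ↦ mul_le_mul_of_nonneg_left (ih ij.2) (hterm ij.1)
      _ = (∑ m ∈ range (n + 1), stirlingWeight a m * x ^ m) *
            (∑' m, stirlingWeight a m * x ^ m) ^ l := by
          rw [Nat.sum_antidiagonal_eq_sum_range_succ_mk, sum_mul]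
      _ ≤ (∑' m, stirlingWeight a m * x ^ m) ^ (l + 1) := by
          rw [pow_succ']
          exact mul_le_mul_of_nonneg_right (hsum.sum_le_tsum _ fun m _ ↦ hterm m)
            (pow_nonneg (tsum_nonneg hterm) l)

end Stirling

section GenStirling

variable {a : ℝ}

theorem genStirling_eq_coeff (a : ℝ) (n l : ℕ) :
    genStirling a n l = n.factorial / l.factorial * coeff n (stirlingSeries a ^ l) := by
  rw [genStirling, coeff_pow_eq_sum_antidiagonalTuple]
  refine congrArg _ ((sum_congr rfl fun f hf ↦ prod_congr rfl fun k _ ↦ ?_).trans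
    (sum_filter_of_ne fun f _ hprod k ↦ Nat.pos_of_ne_zero fun hk ↦ hprod ?_))
  · rw [coeff_stirlingSeries, stirlingWeight, if_neg ((mem_filter.mp hf).2 k).ne']
  · exact prod_eq_zero (mem_univ k) (by simp [hk])

theorem genStirling_zero_zero (a : ℝ) : genStirling a 0 0 = 1 := by
  simp [genStirling_eq_coeff]

theorem genStirling_zero_right (a : ℝ) {n : ℕ} (hn : n ≠ 0) : genStirling a n 0 = 0 := by
  simp [genStirling_eq_coeff, coeff_one, hn]

theorem genStirling_of_lt (a : ℝ) {n l : ℕ} (h : n < l) : genStirling a n l = 0 := by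
  rw [genStirling_eq_coeff, coeff_stirlingSeries_pow_of_lt h, mul_zero]

theorem genStirling_one_one (ha : a < 1) : genStirling a 1 1 = 1 := by
  simp [genStirling_eq_coeff, stirlingWeight_one ha]

theorem genStirling_nonneg (ha : a < 1) (n l : ℕ) : 0 ≤ genStirling a n l := by
  rw [genStirling_eq_coeff]
  have := coeff_stirlingSeries_pow_nonneg ha n l
  positivity

theorem genStirling_succ_succ (ha : a < 1) (n l : ℕ) :
    genStirling a (n + 1) (l + 1) =
      genStirling a n l + (n - a * (l + 1)) * genStirling a n (l + 1) := by
  have h := coeff_stirlingSeries_pow_succ ha n l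
  have hl : (l : ℝ) + 1 ≠ 0 := by positivity
  simp only [genStirling_eq_coeff, Nat.factorial_succ, Nat.cast_mul, Nat.cast_add, Nat.cast_one]
  calc _ = n.factorial / ((l + 1) * l.factorial) *
        ((n + 1) * coeff (n + 1) (stirlingSeries a ^ (l + 1))) := by ring
    _ = _ := by
      rw [h]
      field_simp

end GenStirling

section Rrec

variable {γ0 a p : ℝ} {n : ℕ}

theorem Rrec_of_le (γ0 a p : ℝ) {n i : ℕ} (h : n ≤ i) (j : ℕ) : Rrec γ0 a p n i j = 1 := by
  rw [Rrec, dif_pos h]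

theorem Rrec_of_lt (γ0 a p : ℝ) {n i : ℕ} (h : i < n) (j : ℕ) :
    Rrec γ0 a p n i j = (i - a * j) * Rrec γ0 a p n (i + 1) j +
      γ0 * p ^ (-a) * Rrec γ0 a p n (i + 1) (j + 1) := by
  rw [Rrec, dif_neg (not_le.mpr h)]

theorem Rrec_pos (hq : 0 < γ0 * p ^ (-a)) (ha : a < 1) {i j : ℕ} (hi : 1 ≤ i) (hj : j ≤ i) :
    0 < Rrec γ0 a p n i j := by
  rcases le_or_gt n i with hni | hin
  · rw [Rrec_of_le γ0 a p hni]
    exact one_pos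
  · have hcoef : 0 < (i : ℝ) - a * j := by
      have hi' : (1 : ℝ) ≤ i := by exact_mod_cast hi
      have hj' : (j : ℝ) ≤ i := by exact_mod_cast hj
      rcases le_or_gt a 0 with ha0 | ha0 <;> nlinarith
    rw [Rrec_of_lt γ0 a p hin]
    have := Rrec_pos hq ha (i := i + 1) (j := j) (by omega) (by omega)
    have := Rrec_pos hq ha (i := i + 1) (j := j + 1) (by omega) (by omega)
    positivity
termination_by n - i

theorem mul_Rrec_two_two_le (hq : 0 < γ0 * p ^ (-a)) (ha : a < 1) (hn : 2 ≤ n) :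
    γ0 * p ^ (-a) * Rrec γ0 a p n 2 2 ≤ Rrec γ0 a p n 1 1 := by
  have h21 : 0 < Rrec γ0 a p n 2 1 := Rrec_pos hq ha (by norm_num) (by norm_num)
  have h1a : 0 ≤ (1 - a) * Rrec γ0 a p n 2 1 := mul_nonneg (by linarith) h21.le
  rw [Rrec_of_lt γ0 a p (by omega : 1 < n)]
  simp only [Nat.reduceAdd, Nat.cast_one, mul_one]
  linarith

theorem sum_genStirling_mul_Rrec_succ (ha : a < 1) {i : ℕ} (hi : i ≠ 0) (hin : i < n) :
    ∑ j ∈ range (n + 1), (γ0 * p ^ (-a)) ^ j * genStirling a (i + 1) j * Rrec γ0 a p n (i + 1) j =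
      ∑ j ∈ range (n + 1), (γ0 * p ^ (-a)) ^ j * genStirling a i j * Rrec γ0 a p n i j := by
  set q := γ0 * p ^ (-a)
  calc ∑ j ∈ range (n + 1), q ^ j * genStirling a (i + 1) j * Rrec γ0 a p n (i + 1) j
      = ∑ j ∈ range n, (q ^ (j + 1) * genStirling a i (j + 1) * (i - a * (j + 1 : ℕ)) *
            Rrec γ0 a p n (i + 1) (j + 1) +
          q ^ (j + 1) * genStirling a i j * Rrec γ0 a p n (i + 1) (j + 1)) := by
        rw [sum_range_succ', genStirling_zero_right a i.succ_ne_zero]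
        simp only [mul_zero, zero_mul, add_zero, genStirling_succ_succ ha, Nat.cast_add,
          Nat.cast_one]
        refine sum_congr rfl fun j _ ↦ ?_
        ring
    _ = ∑ j ∈ range (n + 1), q ^ j * genStirling a i j * (i - a * j) * Rrec γ0 a p n (i + 1) j +
          ∑ j ∈ range (n + 1), q ^ (j + 1) * genStirling a i j * Rrec γ0 a p n (i + 1) (j + 1) := by
        rw [sum_add_distrib, sum_range_succ' _ n, sum_range_succ _ n, genStirling_zero_right a hi,
          genStirling_of_lt a hin]
        simp
    _ = ∑ j ∈ range (n + 1), q ^ j * genStirling a i j * Rrec γ0 a p n i j := by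
        rw [← sum_add_distrib]
        refine sum_congr rfl fun j _ ↦ ?_
        rw [Rrec_of_lt γ0 a p hin]
        ring

theorem sum_genStirling_mul_Rrec (ha : a < 1) {i : ℕ} (hi : i ≠ 0) (hin : i ≤ n) :
    ∑ j ∈ range (n + 1), (γ0 * p ^ (-a)) ^ j * genStirling a i j * Rrec γ0 a p n i j =
      ∑ j ∈ range (n + 1), (γ0 * p ^ (-a)) ^ j * genStirling a n j := by
  rcases hin.eq_or_lt with rfl | hlt
  · simp [Rrec_of_le]
  · rw [← sum_genStirling_mul_Rrec_succ ha hi hlt,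
      sum_genStirling_mul_Rrec ha i.succ_ne_zero hlt]
termination_by n - i

end Rrec

section Dsum

variable {γ0 a p : ℝ}

theorem Dsum_eq_sum (hp : 0 ≤ p) (n : ℕ) :
    Dsum γ0 a p n = ∑ l ∈ range (n + 1), (γ0 * p ^ (-a)) ^ l * genStirling a n l := by
  refine sum_congr rfl fun l _ ↦ ?_
  rw [← neg_mul, Real.rpow_mul_natCast hp, mul_pow]

theorem Dsum_eq_mul_Rrec (ha : a < 1) (hp : 0 ≤ p) {n : ℕ} (hn : n ≠ 0) :
    Dsum γ0 a p n = γ0 * p ^ (-a) * Rrec γ0 a p n 1 1 := by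
  rw [Dsum_eq_sum hp, ← sum_genStirling_mul_Rrec ha one_ne_zero (Nat.one_le_iff_ne_zero.mpr hn),
    sum_eq_single 1]
  · simp [genStirling_one_one ha]
  · rintro (_ | _ | j) _ hj
    · simp [genStirling_zero_right]
    · contradiction
    · simp [genStirling_of_lt]
  · exact fun h ↦ absurd (mem_range.mpr (by omega)) h

theorem Dsum_zero : Dsum γ0 a p 0 = 1 := by
  simp [Dsum, genStirling_zero_zero]

theorem Dsum_one (ha : a < 1) (hp : 0 ≤ p) : Dsum γ0 a p 1 = γ0 * p ^ (-a) := by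
  rw [Dsum_eq_mul_Rrec ha hp one_ne_zero, Rrec_of_le γ0 a p le_rfl, mul_one]

theorem Dsum_nonneg (hγ : 0 ≤ γ0) (ha : a < 1) (hp : 0 ≤ p) (n : ℕ) : 0 ≤ Dsum γ0 a p n := by
  rw [Dsum_eq_sum hp]
  have := Real.rpow_nonneg hp (-a)
  exact sum_nonneg fun l _ ↦ mul_nonneg (by positivity) (genStirling_nonneg ha n l)

theorem pow_div_factorial_mul_sum_genStirling_le (ha : a < 1) {q x : ℝ} (hq : 0 ≤ q)
    (hx0 : 0 ≤ x) (hx1 : x < 1) (n : ℕ) :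
    x ^ n / n.factorial * ∑ l ∈ range (n + 1), q ^ l * genStirling a n l ≤
      Real.exp (q * ∑' m, stirlingWeight a m * x ^ m) := by
  have hg : 0 ≤ ∑' m, stirlingWeight a m * x ^ m :=
    tsum_nonneg fun m ↦ mul_nonneg (stirlingWeight_nonneg ha m) (pow_nonneg hx0 m)
  calc x ^ n / n.factorial * ∑ l ∈ range (n + 1), q ^ l * genStirling a n l
      = ∑ l ∈ range (n + 1), q ^ l / l.factorial * (coeff n (stirlingSeries a ^ l) * x ^ n) := by
        rw [mul_sum]
        refine sum_congr rfl fun l _ ↦ ?_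
        rw [genStirling_eq_coeff]
        field_simp
    _ ≤ ∑ l ∈ range (n + 1), (q * ∑' m, stirlingWeight a m * x ^ m) ^ l / l.factorial := by
        refine sum_le_sum fun l _ ↦ ?_
        rw [mul_pow, mul_div_right_comm]
        exact mul_le_mul_of_nonneg_left (coeff_stirlingSeries_pow_mul_pow_le ha hx0 hx1 l n)
          (by positivity)
    _ ≤ _ := Real.sum_le_exp_of_nonneg (mul_nonneg hq hg) _

theorem summable_pow_div_factorial_mul_Dsum (hγ : 0 ≤ γ0) (ha : a < 1) (hp0 : 0 ≤ p)
    (hp1 : p < 1) : Summable fun n ↦ p ^ n / n.factorial * Dsum γ0 a p n := by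
  obtain ⟨x, hpx, hx1⟩ := exists_between hp1
  have hx0 : 0 < x := hp0.trans_lt hpx
  have hq : 0 ≤ γ0 * p ^ (-a) := mul_nonneg hγ (Real.rpow_nonneg hp0 _)
  refine Summable.of_nonneg_of_le (fun n ↦ mul_nonneg (by positivity) (Dsum_nonneg hγ ha hp0 n))
    (fun n ↦ ?_) ((summable_geometric_of_lt_one (by positivity)
      ((div_lt_one hx0).mpr hpx)).mul_right
        (Real.exp (γ0 * p ^ (-a) * ∑' m, stirlingWeight a m * x ^ m)))
  calc p ^ n / n.factorial * Dsum γ0 a p n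
      = (p / x) ^ n * (x ^ n / n.factorial * Dsum γ0 a p n) := by
        rw [div_pow]
        field_simp
    _ ≤ _ := by
        rw [Dsum_eq_sum hp0]
        exact mul_le_mul_of_nonneg_left
          (pow_div_factorial_mul_sum_genStirling_le ha hq hx0.le hx1 n) (by positivity)

end Dsum

theorem gnbPMF_zero (γ0 a p : ℝ) :
    gnbPMF γ0 a p 0 = Real.exp (-γ0 * (1 - (1 - p) ^ a) / (a * p ^ a)) := by
  simp [gnbPMF, Dsum_zero]

theorem gnbPMF_one {γ0 a p : ℝ} (ha : a < 1) (hp : 0 < p) :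
    gnbPMF γ0 a p 1 = γ0 * p ^ (1 - a) * Real.exp (-γ0 * (1 - (1 - p) ^ a) / (a * p ^ a)) := by
  have hp1a : p ^ (1 - a) = p * p ^ (-a) := by
    rw [Real.rpow_sub hp, Real.rpow_one, Real.rpow_neg hp.le, div_eq_mul_inv]
  rw [gnbPMF, Dsum_one ha hp.le, hp1a]
  simp only [pow_one, Nat.factorial_one, Nat.cast_one, div_one]
  ring

theorem summable_pow_div_factorial_mul_Rrec_two_two {γ0 a p : ℝ} (hγ : 0 < γ0) (ha : a < 1)
    (hp0 : 0 < p) (hp1 : p < 1) :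
    Summable fun n : ℕ ↦ p ^ (n + 2) / ((n + 2).factorial : ℝ) * Rrec γ0 a p (n + 2) 2 2 := by
  have hq : 0 < γ0 * p ^ (-a) := by positivity
  refine Summable.of_nonneg_of_le
    (fun n ↦ mul_nonneg (by positivity) (Rrec_pos hq ha (by norm_num) le_rfl).le) (fun n ↦ ?_)
    (((summable_nat_add_iff 2).mpr
      (summable_pow_div_factorial_mul_Dsum hγ.le ha hp0.le hp1)).div_const ((γ0 * p ^ (-a)) ^ 2))
  have hR := mul_Rrec_two_two_le hq ha (n := n + 2) (by omega)
  rw [Dsum_eq_mul_Rrec ha hp0.le (by omega), le_div_iff₀ (by positivity)]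
  linear_combination (p ^ (n + 2) / ((n + 2).factorial : ℝ) * (γ0 * p ^ (-a))) * hR

theorem gnbp_simpson_index_general (γ0 a p c : ℝ) (hγ : 0 < γ0) (ha : a < 1)
    (hp0 : 0 < p) (hp1 : p < 1) (hc : c = (1 - (1 - p) ^ a) / (a * p ^ a)) :
    Summable (fun n : ℕ =>
      γ0 * p ^ (-a) * Rrec γ0 a p (n + 2) 2 2 / Rrec γ0 a p (n + 2) 1 1 *
        (gnbPMF γ0 a p (n + 2) / (1 - gnbPMF γ0 a p 0 - gnbPMF γ0 a p 1))) ∧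
    Summable (fun n : ℕ =>
      p ^ (n + 2) / ((n + 2).factorial : ℝ) * Rrec γ0 a p (n + 2) 2 2) ∧
    (∑' n : ℕ,
        γ0 * p ^ (-a) * Rrec γ0 a p (n + 2) 2 2 / Rrec γ0 a p (n + 2) 1 1 *
          (gnbPMF γ0 a p (n + 2) / (1 - gnbPMF γ0 a p 0 - gnbPMF γ0 a p 1)))
      = γ0 ^ 2 * p ^ (-(2 * a)) * Real.exp (-γ0 * c) /
          (1 - Real.exp (-γ0 * c) - γ0 * p ^ (1 - a) * Real.exp (-γ0 * c)) *
        ∑' n : ℕ, p ^ (n + 2) / ((n + 2).factorial : ℝ) * Rrec γ0 a p (n + 2) 2 2 := by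
  have hq : 0 < γ0 * p ^ (-a) := by positivity
  have hq2 : γ0 ^ 2 * p ^ (-(2 * a)) = (γ0 * p ^ (-a)) ^ 2 := by
    rw [mul_pow, ← Real.rpow_mul_natCast hp0.le, Nat.cast_two, neg_mul, mul_comm a]
  have hE : Real.exp (-γ0 * (1 - (1 - p) ^ a) / (a * p ^ a)) = Real.exp (-γ0 * c) := by
    rw [hc, mul_div_assoc]
  have hdenom : 1 - gnbPMF γ0 a p 0 - gnbPMF γ0 a p 1 =
      1 - Real.exp (-γ0 * c) - γ0 * p ^ (1 - a) * Real.exp (-γ0 * c) := by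
    rw [gnbPMF_zero, gnbPMF_one ha hp0, hE]
  have hterm (n : ℕ) :
      γ0 * p ^ (-a) * Rrec γ0 a p (n + 2) 2 2 / Rrec γ0 a p (n + 2) 1 1 *
        (gnbPMF γ0 a p (n + 2) / (1 - gnbPMF γ0 a p 0 - gnbPMF γ0 a p 1)) =
      γ0 ^ 2 * p ^ (-(2 * a)) * Real.exp (-γ0 * c) /
          (1 - Real.exp (-γ0 * c) - γ0 * p ^ (1 - a) * Real.exp (-γ0 * c)) *
        (p ^ (n + 2) / ((n + 2).factorial : ℝ) * Rrec γ0 a p (n + 2) 2 2) := by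
    have hR : Rrec γ0 a p (n + 2) 1 1 ≠ 0 := (Rrec_pos hq ha le_rfl le_rfl).ne'
    rw [hdenom, gnbPMF, hE, Dsum_eq_mul_Rrec ha hp0.le (by omega), hq2]
    field_simp
  have hsum := summable_pow_div_factorial_mul_Rrec_two_two hγ ha hp0 hp1
  refine ⟨(hsum.mul_left _).congr fun n ↦ (hterm n).symm, hsum, ?_⟩
  rw [tsum_congr hterm, tsum_mul_left]

/-- Prior Simpson's index of diversity under the generalized negative binomial
process: with c = (1 − (1−p)^a)/(a·p^a),
Σ_{n=2}^∞ [γ0·p^{−a}·R_n(2,2)/R_n(1,1)] · p_N(n)/(1 − p_N(0) − p_N(1))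
= [γ0²·p^{−2a}·e^{−γ0c}/(1 − e^{−γ0c} − γ0·p^{1−a}·e^{−γ0c})] · Σ_{n=2}^∞ (p^n/n!)·R_n(2,2),
where both series converge. -/
theorem gnbp_simpson_index (γ0 a p c : ℝ) (hγ : 0 < γ0) (ha : a < 1) (ha0 : a ≠ 0)
    (hp0 : 0 < p) (hp1 : p < 1) (hc : c = (1 - (1 - p) ^ a) / (a * p ^ a)) :
    Summable (fun n : ℕ =>
      γ0 * p ^ (-a) * Rrec γ0 a p (n + 2) 2 2 / Rrec γ0 a p (n + 2) 1 1 *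
        (gnbPMF γ0 a p (n + 2) / (1 - gnbPMF γ0 a p 0 - gnbPMF γ0 a p 1))) ∧
    Summable (fun n : ℕ =>
      p ^ (n + 2) / ((n + 2).factorial : ℝ) * Rrec γ0 a p (n + 2) 2 2) ∧
    (∑' n : ℕ,
        γ0 * p ^ (-a) * Rrec γ0 a p (n + 2) 2 2 / Rrec γ0 a p (n + 2) 1 1 *
          (gnbPMF γ0 a p (n + 2) / (1 - gnbPMF γ0 a p 0 - gnbPMF γ0 a p 1)))
      = γ0 ^ 2 * p ^ (-(2 * a)) * Real.exp (-γ0 * c) /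
          (1 - Real.exp (-γ0 * c) - γ0 * p ^ (1 - a) * Real.exp (-γ0 * c)) *
        ∑' n : ℕ, p ^ (n + 2) / ((n + 2).factorial : ℝ) * Rrec γ0 a p (n + 2) 2 2 :=
  gnbp_simpson_index_general γ0 a p c hγ ha hp0 hp1 hc
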